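/- arXiv:1911.07604 — 2 statements merged into one kernel-verified Lean document; each statement's English description precedes it below -/
import Mathlib

section
/- Define f(n) = ∑_{k=0}^n (-1)^k * C(n,k) * Cat(k) * Cat(n-k). Then for all n ≥ 2, n(n+2) * f(n) = 16 (n-1)^2 * f(n-2). -/
def f9 (n : ℕ) : ℤ :=
  ∑ k ∈ Finset.range (n + 1),
    (-1 : ℤ) ^ k * (n.choose k) * (catalan k) * (catalan (n - k))

/-- summand over ℚ -/
def t9 (n k : ℕ) : ℚ :=
  (-1 : ℚ) ^ k * (n.choose k) * (catalan k) * (catalan (n - k))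

/-- Zeilberger certificate numerator -/
def N9 (x y : ℚ) : ℚ :=
  2*(x-1)*y^4 - 6*x*(x-1)*y^3 + (4*x^3-9*x^2+2)*y^2 + x*(4*x^2-3*x-4)*y

/-- telescoping term -/
def g9 (n k : ℕ) : ℚ :=
  N9 n k * t9 n k / ((n : ℚ) * ((n : ℚ) + 1) * (2*(k : ℚ) - 2*(n : ℚ) + 1))

lemma cat_rec (m : ℕ) :
    ((m : ℚ) + 2) * (catalan (m+1) : ℚ) = 2*(2*(m : ℚ)+1) * (catalan m : ℚ) := by
  have h1 : ((m+1+1) * catalan (m+1) : ℕ) = Nat.centralBinom (m+1) :=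
    succ_mul_catalan_eq_centralBinom (m+1)
  have h2 : ((m+1) * catalan m : ℕ) = Nat.centralBinom m :=
    succ_mul_catalan_eq_centralBinom m
  have h3 := Nat.succ_mul_centralBinom_succ m
  have q1 : ((m : ℚ) + 2) * (catalan (m+1) : ℚ) = (Nat.centralBinom (m+1) : ℚ) := by
    exact_mod_cast congrArg (Nat.cast : ℕ → ℚ) h1
  have q2 : ((m : ℚ) + 1) * (catalan m : ℚ) = (Nat.centralBinom m : ℚ) := by
    exact_mod_cast congrArg (Nat.cast : ℕ → ℚ) h2
  have q3 : ((m : ℚ) + 1) * (Nat.centralBinom (m+1) : ℚ)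
      = 2 * (2*(m : ℚ)+1) * (Nat.centralBinom m : ℚ) := by
    exact_mod_cast congrArg (Nat.cast : ℕ → ℚ) h3
  have hm : ((m : ℚ) + 1) ≠ 0 := by positivity
  apply mul_left_cancel₀ hm
  linear_combination ((m:ℚ)+1) * q1 + q3 - 2*(2*(m:ℚ)+1) * q2

set_option maxHeartbeats 2000000 in
theorem stmt_9 (n : ℕ) (hn : 2 ≤ n) :
    (n : ℤ) * ((n : ℤ) + 2) * f9 n = 16 * ((n : ℤ) - 1) ^ 2 * f9 (n - 2) := by
  obtain ⟨m, rfl⟩ : ∃ m, n = m + 2 := ⟨n - 2, by omega⟩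
  -- key termwise identity
  have key : ∀ k, k ≤ m + 2 →
      ((m:ℚ)+2) * (((m:ℚ)+2) + 2) * t9 (m+2) k - 16 * (((m:ℚ)+2) - 1)^2 * t9 m k
        = g9 (m+2) (k+1) - g9 (m+2) k := by
    intro k hk
    rcases Nat.lt_or_ge k (m+1) with hkm | hkm
    · -- case A : k ≤ m
      obtain ⟨j, rfl⟩ : ∃ j, m = k + j := ⟨m - k, by omega⟩
      have e1 : k + j + 2 - k = j + 2 := by omega
      have e2 : k + j - k = j := by omega
      have e3 : k + j + 2 - (k + 1) = j + 1 := by omega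
      -- choose facts
      have hb1n := Nat.choose_succ_right_eq (k+j+2) k
      rw [show k+j+2-k = j+2 from by omega] at hb1n
      have hb2n := Nat.choose_mul_succ_eq (k+j) k
      rw [show k+j+1-k = j+1 from by omega] at hb2n
      have hb3n := Nat.choose_mul_succ_eq (k+j+1) k
      rw [show k+j+1+1-k = j+2 from by omega, show k+j+1+1 = k+j+2 from rfl] at hb3n
      have hkq : ((k:ℚ)+1) ≠ 0 := by positivity
      have hkq2 : ((k:ℚ)+2) ≠ 0 := by positivity
      have hjq2 : ((j:ℚ)+2) ≠ 0 := by positivity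
      have hjq3 : ((j:ℚ)+3) ≠ 0 := by positivity
      have hkj1 : ((k:ℚ)+(j:ℚ)+1) ≠ 0 := by positivity
      have hkj2 : ((k:ℚ)+(j:ℚ)+2) ≠ 0 := by positivity
      have hkj3 : ((k:ℚ)+(j:ℚ)+2+1) ≠ 0 := by positivity
      have h2j1 : (2*(j:ℚ)+1) ≠ 0 := by positivity
      have h2j3 : (2*(j:ℚ)+3) ≠ 0 := by positivity
      have hb1 : (((k+j+2).choose (k+1) : ℕ) : ℚ)
          = ((j:ℚ)+2) * (((k+j+2).choose k : ℕ) : ℚ) / ((k:ℚ)+1) := by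
        have h := congrArg (Nat.cast : ℕ → ℚ) hb1n
        push_cast at h
        rw [eq_div_iff hkq]
        linear_combination h
      have hb2 : (((k+j).choose k : ℕ) : ℚ)
          = ((j:ℚ)+2) * ((j:ℚ)+1) * (((k+j+2).choose k : ℕ) : ℚ)
            / (((k:ℚ)+(j:ℚ)+2) * ((k:ℚ)+(j:ℚ)+1)) := by
        have h2 := congrArg (Nat.cast : ℕ → ℚ) hb2n
        have h3 := congrArg (Nat.cast : ℕ → ℚ) hb3n
        push_cast at h2 h3
        rw [eq_div_iff (mul_ne_zero hkj2 hkj1)]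
        linear_combination ((k:ℚ)+(j:ℚ)+2) * h2 + ((j:ℚ)+1) * h3
      have hc1 : ((catalan (k+1) : ℕ) : ℚ)
          = 2*(2*(k:ℚ)+1) * ((catalan k : ℕ) : ℚ) / ((k:ℚ)+2) := by
        rw [eq_div_iff hkq2]
        linear_combination cat_rec k
      have hd1 : ((catalan (j+1) : ℕ) : ℚ)
          = 2*(2*(j:ℚ)+1) * ((catalan j : ℕ) : ℚ) / ((j:ℚ)+2) := by
        rw [eq_div_iff hjq2]
        linear_combination cat_rec j
      have hd2 : ((catalan (j+2) : ℕ) : ℚ)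
          = 2*(2*(j:ℚ)+3) * ((catalan (j+1) : ℕ) : ℚ) / ((j:ℚ)+3) := by
        have h := cat_rec (j+1)
        push_cast at h
        rw [eq_div_iff hjq3]
        linear_combination h
      simp only [t9, g9, N9, e1, e2, e3]
      rw [hb1, hb2, hc1, hd2, hd1]
      push_cast
      rw [show ((k:ℚ) + (j:ℚ) + 2) * ((k:ℚ) + (j:ℚ) + 2 + 1) * (2 * ((k:ℚ) + 1) - 2 * ((k:ℚ) + (j:ℚ) + 2) + 1)
            = -(((k:ℚ)+(j:ℚ)+2) * ((k:ℚ)+(j:ℚ)+2+1) * (2*(j:ℚ)+1)) from by ring,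
          show ((k:ℚ) + (j:ℚ) + 2) * ((k:ℚ) + (j:ℚ) + 2 + 1) * (2 * (k:ℚ) - 2 * ((k:ℚ) + (j:ℚ) + 2) + 1)
            = -(((k:ℚ)+(j:ℚ)+2) * ((k:ℚ)+(j:ℚ)+2+1) * (2*(j:ℚ)+3)) from by ring,
          div_neg, div_neg, pow_succ (-1 : ℚ) k]
      field_simp
      ring
    · -- k = m+1 or k = m+2
      have hdm2 : ((m:ℚ)+2) ≠ 0 := by positivity
      have hdm3 : ((m:ℚ)+3) ≠ 0 := by positivity
      rcases Nat.eq_or_lt_of_le hkm with hk1 | hk2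
      · -- k = m+1
        have hk1' : k = m + 1 := hk1.symm
        subst hk1'
        have e1 : m + 2 - (m+1) = 1 := by omega
        have e2 : m - (m+1) = 0 := by omega
        have e3 : m + 2 - (m+1+1) = 0 := by omega
        have hch1 : (m+2).choose (m+1) = m+2 := Nat.choose_succ_self_right (m+1)
        have hch2 : m.choose (m+1) = 0 := Nat.choose_succ_self m
        have hch3 : (m+2).choose (m+1+1) = 1 := by
          rw [show m+1+1 = m+2 from rfl, Nat.choose_self]
        have hd : ((catalan (m+2) : ℕ) : ℚ)
            = 2*(2*(m:ℚ)+3) * ((catalan (m+1) : ℕ) : ℚ) / ((m:ℚ)+3) := by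
          have h := cat_rec (m+1)
          push_cast at h
          rw [eq_div_iff hdm3]
          linear_combination h
        simp only [t9, g9, N9, e1, e2, e3, hch1, hch2, hch3, catalan_one, catalan_zero,
          show m+1+1 = m+2 from rfl]
        rw [hd]
        push_cast
        rw [show ((m:ℚ) + 2) * ((m:ℚ) + 2 + 1) * (2 * ((m:ℚ) + 1) - 2 * ((m:ℚ) + 2) + 1)
              = -(((m:ℚ)+2) * ((m:ℚ)+2+1)) from by ring,
            div_neg, pow_succ (-1 : ℚ) (m+1), pow_succ (-1 : ℚ) m]
        have hne : ((m:ℚ)+2) * ((m:ℚ)+2+1) ≠ 0 := by positivity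
        field_simp
        ring
      · -- k = m+2
        have hk1 : k = m + 2 := by omega
        subst hk1
        have e1 : m + 2 - (m+2) = 0 := by omega
        have e2 : m - (m+2) = 0 := by omega
        have hch2 : m.choose (m+2) = 0 := Nat.choose_eq_zero_of_lt (by omega)
        have hch3 : (m+2).choose (m+2+1) = 0 := Nat.choose_succ_self (m+2)
        simp only [t9, g9, N9, e1, e2, hch2, hch3, Nat.choose_self, catalan_zero]
        rw [pow_succ, pow_succ]
        push_cast
        field_simp
        ring
  -- cast of f9 to ℚ
  have hcast : ∀ N : ℕ, ((f9 N : ℤ) : ℚ) = ∑ k ∈ Finset.range (N+1), t9 N k := by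
    intro N
    rw [f9]
    push_cast [t9]
    rfl
  -- telescoping
  have tele : ∑ k ∈ Finset.range (m+2+1), (g9 (m+2) (k+1) - g9 (m+2) k)
      = g9 (m+2) (m+2+1) - g9 (m+2) 0 := Finset.sum_range_sub (g9 (m+2)) (m+2+1)
  have hg0 : g9 (m+2) 0 = 0 := by
    simp [g9, N9]
  have hgtop : g9 (m+2) (m+2+1) = 0 := by
    simp [g9, t9, Nat.choose_succ_self]
  have hsum : ∑ k ∈ Finset.range (m+2+1),
      (((m:ℚ)+2) * (((m:ℚ)+2) + 2) * t9 (m+2) k - 16 * (((m:ℚ)+2) - 1)^2 * t9 m k)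
      = ∑ k ∈ Finset.range (m+2+1), (g9 (m+2) (k+1) - g9 (m+2) k) := by
    refine Finset.sum_congr rfl fun k hk => key k ?_
    simp only [Finset.mem_range] at hk
    omega
  rw [Finset.sum_sub_distrib, ← Finset.mul_sum, ← Finset.mul_sum, tele, hg0, hgtop] at hsum
  -- peel the two vanishing terms of the t9 m sum
  have peel : ∑ k ∈ Finset.range (m+2+1), t9 m k = ∑ k ∈ Finset.range (m+1), t9 m k := by
    rw [Finset.sum_range_succ, Finset.sum_range_succ]
    have hz1 : t9 m (m+1) = 0 := by simp [t9, Nat.choose_succ_self]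
    have hz2 : t9 m (m+2) = 0 := by
      simp [t9, Nat.choose_eq_zero_of_lt (show m < m+2 by omega)]
    rw [hz1, hz2]
    ring
  rw [peel] at hsum
  have main : ((m:ℚ)+2) * (((m:ℚ)+2) + 2) * ((f9 (m+2) : ℤ) : ℚ)
      = 16 * (((m:ℚ)+2) - 1)^2 * ((f9 m : ℤ) : ℚ) := by
    rw [hcast (m+2), hcast m]
    linarith [hsum]
  have hfin : ((m+2 : ℕ) : ℤ) * (((m+2 : ℕ) : ℤ) + 2) * f9 (m+2)
      = 16 * (((m+2 : ℕ) : ℤ) - 1)^2 * f9 m := by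
    exact_mod_cast main
  rw [show m+2-2 = m from rfl]
  exact_mod_cast hfin
end

section
/- For every natural number n, ∑_{k=0}^{2n} (-1)^k * C(2n,k) * Cat(k) * C(4n-2k, 2n-k) = C(2n,n)^2, i.e., the first identity specialized to even arguments. -/
def Fq (m k : ℕ) : ℚ :=
  (-1) ^ k * (m.choose k) * (catalan k) * ((2 * (m - k)).choose (m - k))

def Nq (m k : ℚ) : ℚ :=
  (-256) * k + 500 * k ^ 2 + 228 * k ^ 3 + (-448) * k ^ 4 + 80 * k ^ 5
  + m * ((-1432) * k + 1596 * k ^ 2 + 1452 * k ^ 3 + (-1384) * k ^ 4 + 192 * k ^ 5)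
  + m ^ 2 * ((-3108) * k + 1548 * k ^ 2 + 2952 * k ^ 3 + (-1560) * k ^ 4 + 144 * k ^ 5)
  + m ^ 3 * ((-3372) * k + 52 * k ^ 2 + 2640 * k ^ 3 + (-752) * k ^ 4 + 32 * k ^ 5)
  + m ^ 4 * ((-1936) * k + (-736) * k ^ 2 + 1072 * k ^ 3 + (-128) * k ^ 4)
  + m ^ 5 * ((-560) * k + (-400) * k ^ 2 + 160 * k ^ 3)
  + m ^ 6 * ((-64) * k + (-64) * k ^ 2)

def Gq (m k : ℕ) : ℚ :=
  Nq m k * Fq (m + 2) k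
    / (4 * ((m : ℚ) + 1) * ((m : ℚ) + 2) ^ 2 * (2 * m + 1 - 2 * k) * (2 * m + 3 - 2 * k))

lemma keyM (m k : ℕ) :
    2 * ((m : ℚ) + 1) * (2 * m + 1 - 2 * k) * Fq m k = ((m : ℚ) + 1 - k) ^ 2 * Fq (m + 1) k := by
  rcases le_or_gt k m with h | h
  · obtain ⟨j, rfl⟩ : ∃ j, m = k + j := ⟨m - k, by omega⟩
    have e1 : k + j - k = j := by omega
    have e2 : k + j + 1 - k = j + 1 := by omega
    have f1 : (k + j).choose k * (k + j + 1) = (k + j + 1).choose k * (j + 1) := by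
      have := Nat.choose_mul_succ_eq (k + j) k
      simpa [show k + j + 1 - k = j + 1 from by omega] using this
    have f2 : (j + 1) * ((2 * (j + 1)).choose (j + 1)) = 2 * (2 * j + 1) * ((2 * j).choose j) := by
      have := Nat.succ_mul_centralBinom_succ j
      simpa [Nat.centralBinom] using this
    have f1q : ((k + j).choose k : ℚ) * (k + j + 1) = ((k + j + 1).choose k : ℚ) * (j + 1) := by
      exact_mod_cast f1
    have f2q : ((j : ℚ) + 1) * ((2 * (j + 1)).choose (j + 1) : ℚ)
        = 2 * (2 * j + 1) * ((2 * j).choose j : ℚ) := by exact_mod_cast f2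
    simp only [Fq, e1, e2]
    push_cast [show 2 * (j + 1) = 2 * j + 2 from by ring] at f2q ⊢
    linear_combination ((-1 : ℚ) ^ k * (catalan k) * 2 * (2 * j + 1) * ((2 * j).choose j)) * f1q
      - ((-1 : ℚ) ^ k * (catalan k) * ((j : ℚ) + 1) * ((k + j + 1).choose k)) * f2q
  · rcases eq_or_lt_of_le (Nat.succ_le_of_lt h) with h2 | h2
    · have hk : k = m + 1 := h2.symm
      subst hk
      have : Fq m (m + 1) = 0 := by simp [Fq, Nat.choose_eq_zero_of_lt]
      rw [this]
      push_cast
      ring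
    · have z1 : Fq m k = 0 := by simp [Fq, Nat.choose_eq_zero_of_lt h]
      have z2 : Fq (m + 1) k = 0 := by simp [Fq, Nat.choose_eq_zero_of_lt h2]
      rw [z1, z2]; ring

lemma keyK (M k : ℕ) :
    ((k : ℚ) + 1) * ((k : ℚ) + 2) * (2 * M - 1 - 2 * k) * Fq M (k + 1)
      = -(((M : ℚ) - k) ^ 2 * (2 * k + 1)) * Fq M k := by
  rcases lt_or_ge k M with h | h
  · obtain ⟨j, rfl⟩ : ∃ j, M = k + 1 + j := ⟨M - 1 - k, by omega⟩
    have e1 : k + 1 + j - (k + 1) = j := by omega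
    have e2 : k + 1 + j - k = j + 1 := by omega
    -- g1 : C(M,k+1)*(k+1) = C(M,k)*(j+1)
    have g1 : (k + 1 + j).choose (k + 1) * (k + 1) = (k + 1 + j).choose k * (j + 1) := by
      have := Nat.choose_succ_right_eq (k + 1 + j) k
      simpa [e2] using this
    -- catalan ratio with (k+1) factor
    have g2 : (k + 1) * ((k + 2) * catalan (k + 1)) = (k + 1) * (2 * (2 * k + 1) * catalan k) := by
      have h1 := succ_mul_catalan_eq_centralBinom (k + 1)
      have h2 := Nat.succ_mul_centralBinom_succ k
      have h3 := succ_mul_catalan_eq_centralBinom k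
      calc (k + 1) * ((k + 2) * catalan (k + 1)) = (k + 1) * Nat.centralBinom (k + 1) := by
            rw [h1]
        _ = 2 * (2 * k + 1) * Nat.centralBinom k := h2
        _ = 2 * (2 * k + 1) * ((k + 1) * catalan k) := by rw [h3]
        _ = (k + 1) * (2 * (2 * k + 1) * catalan k) := by ring
    have g2' : (k + 2) * catalan (k + 1) = 2 * (2 * k + 1) * catalan k :=
      Nat.eq_of_mul_eq_mul_left (by omega) g2
    have g3 : (j + 1) * ((2 * (j + 1)).choose (j + 1)) = 2 * (2 * j + 1) * ((2 * j).choose j) := by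
      have := Nat.succ_mul_centralBinom_succ j
      simpa [Nat.centralBinom] using this
    have g1q : ((k + 1 + j).choose (k + 1) : ℚ) * (k + 1) = ((k + 1 + j).choose k : ℚ) * (j + 1) := by
      exact_mod_cast g1
    have g2q : ((k : ℚ) + 2) * (catalan (k + 1) : ℚ) = 2 * (2 * k + 1) * (catalan k : ℚ) := by
      exact_mod_cast g2'
    have g3q : ((j : ℚ) + 1) * ((2 * (j + 1)).choose (j + 1) : ℚ)
        = 2 * (2 * j + 1) * ((2 * j).choose j : ℚ) := by exact_mod_cast g3
    simp only [Fq, e1, e2]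
    push_cast [show 2 * (j + 1) = 2 * j + 2 from by ring, pow_succ] at g3q ⊢
    linear_combination
      (-((-1 : ℚ) ^ k) * (2 * j + 1) * ((2 * j).choose j) * ((k : ℚ) + 2) * (catalan (k + 1))) * g1q
      + (-((-1 : ℚ) ^ k) * (2 * j + 1) * ((2 * j).choose j) * ((j : ℚ) + 1)
          * ((k + 1 + j).choose k)) * g2q
      + (((-1 : ℚ) ^ k) * (2 * k + 1) * ((j : ℚ) + 1) * ((k + 1 + j).choose k) * (catalan k)) * g3q
  · rcases eq_or_lt_of_le h with h2 | h2
    · obtain rfl : M = k := h2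
      have : Fq M (M + 1) = 0 := by simp [Fq, Nat.choose_eq_zero_of_lt]
      rw [this]
      ring
    · have z1 : Fq M k = 0 := by simp [Fq, Nat.choose_eq_zero_of_lt h2]
      have z2 : Fq M (k + 1) = 0 := by
        simp [Fq, Nat.choose_eq_zero_of_lt (by omega : M < k + 1)]
      rw [z1, z2]; ring

set_option maxHeartbeats 4000000 in
lemma step (m k : ℕ) :
    (((m : ℚ) + 3) ^ 2 * (2 * m + 3)) * Fq (m + 2) k
      - 4 * (2 * (m : ℚ) ^ 2 + 8 * m + 7) * Fq (m + 1) k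
      - 16 * ((m : ℚ) + 1) ^ 2 * (2 * (m : ℚ) + 5) * Fq m k
      = Gq m (k + 1) - Gq m k := by
  have hz1 : (2 * (m : ℚ) + 3 - 2 * k) ≠ 0 := by
    intro h
    have : 2 * (m : ℤ) + 3 - 2 * k = 0 := by exact_mod_cast h
    omega
  have hz2 : (2 * (m : ℚ) + 1 - 2 * k) ≠ 0 := by
    intro h
    have : 2 * (m : ℤ) + 1 - 2 * k = 0 := by exact_mod_cast h
    omega
  have hz3 : (2 * (m : ℚ) - 1 - 2 * k) ≠ 0 := by
    intro h
    have : 2 * (m : ℤ) - 1 - 2 * k = 0 := by exact_mod_cast h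
    omega
  have hm1 : ((m : ℚ) + 1) ≠ 0 := by positivity
  have hm2 : ((m : ℚ) + 2) ≠ 0 := by positivity
  have hD0 : (4 * ((m : ℚ) + 1) * ((m : ℚ) + 2) ^ 2 * (2 * (m:ℚ) + 1 - 2 * (k:ℕ))
      * (2 * (m:ℚ) + 3 - 2 * (k:ℕ))) ≠ 0 := by
    apply mul_ne_zero; apply mul_ne_zero; apply mul_ne_zero; apply mul_ne_zero
    · norm_num
    · exact hm1
    · exact pow_ne_zero _ hm2
    · exact hz2
    · exact hz1
  have hD1 : (4 * ((m : ℚ) + 1) * ((m : ℚ) + 2) ^ 2 * (2 * (m:ℚ) + 1 - 2 * ((k:ℕ) + 1 : ℕ))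
      * (2 * (m:ℚ) + 3 - 2 * ((k:ℕ) + 1 : ℕ))) ≠ 0 := by
    push_cast
    apply mul_ne_zero; apply mul_ne_zero; apply mul_ne_zero; apply mul_ne_zero
    · norm_num
    · exact hm1
    · exact pow_ne_zero _ hm2
    · intro h; apply hz3; linarith
    · intro h; apply hz2; linarith
  have h1 := keyM (m + 1) k
  have h2 := keyM m k
  have h3 := keyK (m + 2) k
  push_cast at h1 h2 h3
  rw [Gq, Gq, div_sub_div _ _ hD1 hD0, eq_div_iff (mul_ne_zero hD1 hD0), Nq, Nq]
  push_cast
  linear_combination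
    (((4352)
      + (-8704) * (k:ℚ)^1
      + (-14848) * (k:ℚ)^2
      + (34816) * (k:ℚ)^3
      + (-10240) * (k:ℚ)^4
      + (29568) * (m:ℚ)^1
      + (-12032) * (m:ℚ)^1 * (k:ℚ)^1
      + (-175360) * (m:ℚ)^1 * (k:ℚ)^2
      + (207872) * (m:ℚ)^1 * (k:ℚ)^3
      + (-50176) * (m:ℚ)^1 * (k:ℚ)^4
      + (68800) * (m:ℚ)^2
      + (162432) * (m:ℚ)^2 * (k:ℚ)^1
      + (-704128) * (m:ℚ)^2 * (k:ℚ)^2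
      + (536064) * (m:ℚ)^2 * (k:ℚ)^3
      + (-102912) * (m:ℚ)^2 * (k:ℚ)^4
      + (23840) * (m:ℚ)^3
      + (734144) * (m:ℚ)^3 * (k:ℚ)^1
      + (-1461440) * (m:ℚ)^3 * (k:ℚ)^2
      + (777472) * (m:ℚ)^3 * (k:ℚ)^3
      + (-114432) * (m:ℚ)^3 * (k:ℚ)^4
      + (-198400) * (m:ℚ)^4
      + (1456896) * (m:ℚ)^4 * (k:ℚ)^1
      + (-1813312) * (m:ℚ)^4 * (k:ℚ)^2
      + (691712) * (m:ℚ)^4 * (k:ℚ)^3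
      + (-74496) * (m:ℚ)^4 * (k:ℚ)^4
      + (-470368) * (m:ℚ)^5
      + (1683904) * (m:ℚ)^5 * (k:ℚ)^1
      + (-1425344) * (m:ℚ)^5 * (k:ℚ)^2
      + (385792) * (m:ℚ)^5 * (k:ℚ)^3
      + (-28416) * (m:ℚ)^5 * (k:ℚ)^4
      + (-542912) * (m:ℚ)^6
      + (1228800) * (m:ℚ)^6 * (k:ℚ)^1
      + (-717888) * (m:ℚ)^6 * (k:ℚ)^2
      + (131584) * (m:ℚ)^6 * (k:ℚ)^3
      + (-5888) * (m:ℚ)^6 * (k:ℚ)^4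
      + (-380544) * (m:ℚ)^7
      + (576000) * (m:ℚ)^7 * (k:ℚ)^1
      + (-224896) * (m:ℚ)^7 * (k:ℚ)^2
      + (25088) * (m:ℚ)^7 * (k:ℚ)^3
      + (-512) * (m:ℚ)^7 * (k:ℚ)^4
      + (-169408) * (m:ℚ)^8
      + (168704) * (m:ℚ)^8 * (k:ℚ)^1
      + (-39936) * (m:ℚ)^8 * (k:ℚ)^2
      + (2048) * (m:ℚ)^8 * (k:ℚ)^3
      + (-46976) * (m:ℚ)^9
      + (28160) * (m:ℚ)^9 * (k:ℚ)^1
      + (-3072) * (m:ℚ)^9 * (k:ℚ)^2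
      + (-7424) * (m:ℚ)^10
      + (2048) * (m:ℚ)^10 * (k:ℚ)^1
      + (-512) * (m:ℚ)^11)) * h1
    + (((30720)
      + (-20480) * (k:ℚ)^1
      + (-122880) * (k:ℚ)^2
      + (81920) * (k:ℚ)^3
      + (186368) * (m:ℚ)^1
      + (135168) * (m:ℚ)^1 * (k:ℚ)^1
      + (-909312) * (m:ℚ)^1 * (k:ℚ)^2
      + (442368) * (m:ℚ)^1 * (k:ℚ)^3
      + (371712) * (m:ℚ)^2
      + (1316864) * (m:ℚ)^2 * (k:ℚ)^1
      + (-2863104) * (m:ℚ)^2 * (k:ℚ)^2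
      + (1024000) * (m:ℚ)^2 * (k:ℚ)^3
      + (8192) * (m:ℚ)^3
      + (4067328) * (m:ℚ)^3 * (k:ℚ)^1
      + (-5062656) * (m:ℚ)^3 * (k:ℚ)^2
      + (1327104) * (m:ℚ)^3 * (k:ℚ)^3
      + (-1251456) * (m:ℚ)^4
      + (6789888) * (m:ℚ)^4 * (k:ℚ)^1
      + (-5561856) * (m:ℚ)^4 * (k:ℚ)^2
      + (1053696) * (m:ℚ)^4 * (k:ℚ)^3
      + (-2554240) * (m:ℚ)^5
      + (7011072) * (m:ℚ)^5 * (k:ℚ)^1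
      + (-3949056) * (m:ℚ)^5 * (k:ℚ)^2
      + (525312) * (m:ℚ)^5 * (k:ℚ)^3
      + (-2716032) * (m:ℚ)^6
      + (4696832) * (m:ℚ)^6 * (k:ℚ)^1
      + (-1817088) * (m:ℚ)^6 * (k:ℚ)^2
      + (160768) * (m:ℚ)^6 * (k:ℚ)^3
      + (-1791104) * (m:ℚ)^7
      + (2051328) * (m:ℚ)^7 * (k:ℚ)^1
      + (-523776) * (m:ℚ)^7 * (k:ℚ)^2
      + (27648) * (m:ℚ)^7 * (k:ℚ)^3
      + (-758784) * (m:ℚ)^8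
      + (564736) * (m:ℚ)^8 * (k:ℚ)^1
      + (-86016) * (m:ℚ)^8 * (k:ℚ)^2
      + (2048) * (m:ℚ)^8 * (k:ℚ)^3
      + (-201728) * (m:ℚ)^9
      + (89088) * (m:ℚ)^9 * (k:ℚ)^1
      + (-6144) * (m:ℚ)^9 * (k:ℚ)^2
      + (-30720) * (m:ℚ)^10
      + (6144) * (m:ℚ)^10 * (k:ℚ)^1
      + (-2048) * (m:ℚ)^11)) * h2
    + (((-832)
      + (2624) * (k:ℚ)^1
      + (2688) * (k:ℚ)^2
      + (-10496) * (k:ℚ)^3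
      + (2560) * (k:ℚ)^4
      + (-6720) * (m:ℚ)^1
      + (6720) * (m:ℚ)^1 * (k:ℚ)^1
      + (45056) * (m:ℚ)^1 * (k:ℚ)^2
      + (-58624) * (m:ℚ)^1 * (k:ℚ)^3
      + (11264) * (m:ℚ)^1 * (k:ℚ)^4
      + (-17744) * (m:ℚ)^2
      + (-35504) * (m:ℚ)^2 * (k:ℚ)^1
      + (188832) * (m:ℚ)^2 * (k:ℚ)^2
      + (-137536) * (m:ℚ)^2 * (k:ℚ)^3
      + (20096) * (m:ℚ)^2 * (k:ℚ)^4
      + (-8128) * (m:ℚ)^3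
      + (-188352) * (m:ℚ)^3 * (k:ℚ)^1
      + (376672) * (m:ℚ)^3 * (k:ℚ)^2
      + (-175104) * (m:ℚ)^3 * (k:ℚ)^3
      + (18560) * (m:ℚ)^3 * (k:ℚ)^4
      + (49888) * (m:ℚ)^4
      + (-371792) * (m:ℚ)^4 * (k:ℚ)^1
      + (425184) * (m:ℚ)^4 * (k:ℚ)^2
      + (-130240) * (m:ℚ)^4 * (k:ℚ)^3
      + (9344) * (m:ℚ)^4 * (k:ℚ)^4
      + (119328) * (m:ℚ)^5
      + (-400672) * (m:ℚ)^5 * (k:ℚ)^1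
      + (287008) * (m:ℚ)^5 * (k:ℚ)^2
      + (-56448) * (m:ℚ)^5 * (k:ℚ)^3
      + (2432) * (m:ℚ)^5 * (k:ℚ)^4
      + (130096) * (m:ℚ)^6
      + (-256672) * (m:ℚ)^6 * (k:ℚ)^1
      + (114816) * (m:ℚ)^6 * (k:ℚ)^2
      + (-13184) * (m:ℚ)^6 * (k:ℚ)^3
      + (256) * (m:ℚ)^6 * (k:ℚ)^4
      + (81312) * (m:ℚ)^7
      + (-97600) * (m:ℚ)^7 * (k:ℚ)^1
      + (25088) * (m:ℚ)^7 * (k:ℚ)^2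
      + (-1280) * (m:ℚ)^7 * (k:ℚ)^3
      + (29888) * (m:ℚ)^8
      + (-20352) * (m:ℚ)^8 * (k:ℚ)^1
      + (2304) * (m:ℚ)^8 * (k:ℚ)^2
      + (6016) * (m:ℚ)^9
      + (-1792) * (m:ℚ)^9 * (k:ℚ)^1
      + (512) * (m:ℚ)^10)) * h3


def Sq (M : ℕ) : ℚ := ∑ k ∈ Finset.range (M + 1), Fq M k

def Tq (m : ℕ) : ℚ := ((m.choose (m / 2) : ℚ)) ^ 2

lemma Srec (m : ℕ) :
    (((m : ℚ) + 3) ^ 2 * (2 * m + 3)) * Sq (m + 2)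
      = 4 * (2 * (m : ℚ) ^ 2 + 8 * m + 7) * Sq (m + 1)
        + 16 * ((m : ℚ) + 1) ^ 2 * (2 * (m : ℚ) + 5) * Sq m := by
  have tel : ∑ k ∈ Finset.range (m + 3), (Gq m (k + 1) - Gq m k) = Gq m (m + 3) - Gq m 0 :=
    Finset.sum_range_sub (Gq m) (m + 3)
  have hG0 : Gq m 0 = 0 := by
    have hN : Nq (m : ℚ) 0 = 0 := by norm_num [Nq]
    simp only [Gq, Nat.cast_zero, hN, zero_mul, zero_div]
  have hGtop : Gq m (m + 3) = 0 := by
    have hF : Fq (m + 2) (m + 3) = 0 := by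
      simp [Fq, Nat.choose_eq_zero_of_lt (by omega : m + 2 < m + 3)]
    simp [Gq, hF]
  have hsum : ∑ k ∈ Finset.range (m + 3),
      ((((m : ℚ) + 3) ^ 2 * (2 * m + 3)) * Fq (m + 2) k
        - 4 * (2 * (m : ℚ) ^ 2 + 8 * m + 7) * Fq (m + 1) k
        - 16 * ((m : ℚ) + 1) ^ 2 * (2 * (m : ℚ) + 5) * Fq m k) = 0 := by
    rw [Finset.sum_congr rfl (fun k _ => step m k), tel, hG0, hGtop, sub_zero]
  have z1 : Fq (m + 1) (m + 2) = 0 := by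
    simp [Fq, Nat.choose_eq_zero_of_lt (by omega : m + 1 < m + 2)]
  have z2 : Fq m (m + 1) = 0 := by
    simp [Fq, Nat.choose_eq_zero_of_lt (by omega : m < m + 1)]
  have z3 : Fq m (m + 2) = 0 := by
    simp [Fq, Nat.choose_eq_zero_of_lt (by omega : m < m + 2)]
  have e2 : ∑ k ∈ Finset.range (m + 3), Fq (m + 2) k = Sq (m + 2) := rfl
  have e1 : ∑ k ∈ Finset.range (m + 3), Fq (m + 1) k = Sq (m + 1) := by
    rw [show m + 3 = (m + 2) + 1 from rfl, Finset.sum_range_succ, z1, add_zero]; rfl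
  have e0 : ∑ k ∈ Finset.range (m + 3), Fq m k = Sq m := by
    rw [show m + 3 = (m + 2) + 1 from rfl, Finset.sum_range_succ, z3, add_zero,
      show m + 2 = (m + 1) + 1 from rfl, Finset.sum_range_succ, z2, add_zero]; rfl
  rw [Finset.sum_sub_distrib, Finset.sum_sub_distrib, ← Finset.mul_sum, ← Finset.mul_sum,
    ← Finset.mul_sum, e2, e1, e0] at hsum
  linarith

lemma Trec (m : ℕ) :
    (((m : ℚ) + 3) ^ 2 * (2 * m + 3)) * Tq (m + 2)
      = 4 * (2 * (m : ℚ) ^ 2 + 8 * m + 7) * Tq (m + 1)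
        + 16 * ((m : ℚ) + 1) ^ 2 * (2 * (m : ℚ) + 5) * Tq m := by
  rcases Nat.even_or_odd m with ⟨n, rfl⟩ | ⟨n, rfl⟩
  · have d0 : (n + n) / 2 = n := by omega
    have d1 : (n + n + 1) / 2 = n := by omega
    have d2 : (n + n + 2) / 2 = n + 1 := by omega
    have r1 : (2 * n + 1) * (2 * n).choose n = (2 * n + 1).choose (n + 1) * (n + 1) :=
      Nat.add_one_mul_choose_eq (2 * n) n
    rw [Nat.choose_symm_half n] at r1
    have r2 : (2 * n + 2).choose (n + 1) = (2 * n + 1).choose n + (2 * n + 1).choose (n + 1) :=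
      Nat.choose_succ_succ (2 * n + 1) n
    rw [Nat.choose_symm_half n] at r2
    have r1q : (2 * (n : ℚ) + 1) * ((2 * n).choose n : ℚ)
        = ((2 * n + 1).choose n : ℚ) * ((n : ℚ) + 1) := by exact_mod_cast r1
    have r2q : ((2 * n + 2).choose (n + 1) : ℚ) = 2 * ((2 * n + 1).choose n : ℚ) := by
      rw [show ((2 * n + 1).choose n) + ((2 * n + 1).choose n)
          = 2 * ((2 * n + 1).choose n) from by ring] at r2
      exact_mod_cast r2
    simp only [Tq, show n + n + 2 = 2 * n + 2 from by ring, show n + n + 1 = 2 * n + 1 from by ring,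
      show n + n = 2 * n from by ring, d0, d1, d2,
      show (2 * n) / 2 = n from by omega, show (2 * n + 1) / 2 = n from by omega,
      show (2 * n + 2) / 2 = n + 1 from by omega]
    push_cast
    rw [r2q]
    linear_combination (-(16 * (4 * (n : ℚ) + 5)
        * (((n : ℚ) + 1) * ((2 * n + 1).choose n : ℚ)
          + (2 * (n : ℚ) + 1) * ((2 * n).choose n : ℚ)))) * r1q
  · have r2 : (2 * n + 2).choose (n + 1) = (2 * n + 1).choose n + (2 * n + 1).choose (n + 1) :=
      Nat.choose_succ_succ (2 * n + 1) n
    rw [Nat.choose_symm_half n] at r2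
    have r2q : ((2 * n + 2).choose (n + 1) : ℚ) = 2 * ((2 * n + 1).choose n : ℚ) := by
      rw [show ((2 * n + 1).choose n) + ((2 * n + 1).choose n)
          = 2 * ((2 * n + 1).choose n) from by ring] at r2
      exact_mod_cast r2
    have r3 : (2 * n + 2).choose (n + 1) * (2 * n + 3) = (2 * n + 3).choose (n + 1) * (n + 2) := by
      have := Nat.choose_mul_succ_eq (2 * n + 2) (n + 1)
      simpa [show 2 * n + 2 + 1 - (n + 1) = n + 2 from by omega] using this
    have r3q : ((2 * n + 2).choose (n + 1) : ℚ) * (2 * (n : ℚ) + 3)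
        = ((2 * n + 3).choose (n + 1) : ℚ) * ((n : ℚ) + 2) := by exact_mod_cast r3
    simp only [Tq, show 2 * n + 1 + 2 = 2 * n + 3 from by ring,
      show 2 * n + 1 + 1 = 2 * n + 2 from by ring,
      show (2 * n + 1) / 2 = n from by omega, show (2 * n + 2) / 2 = n + 1 from by omega,
      show (2 * n + 3) / 2 = n + 1 from by omega]
    rw [r2q] at r3q
    push_cast
    rw [r2q]
    linear_combination (-(4 * (4 * (n : ℚ) + 5)
        * (((n : ℚ) + 2) * ((2 * n + 3).choose (n + 1) : ℚ)
            + 2 * (2 * (n : ℚ) + 3) * ((2 * n + 1).choose n : ℚ)))) * r3q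

lemma SeqT : ∀ m : ℕ, Sq m = Tq m ∧ Sq (m + 1) = Tq (m + 1) := by
  intro m
  induction m with
  | zero =>
    constructor
    · norm_num [Sq, Tq, Fq, Finset.sum_range_succ]
    · norm_num [Sq, Tq, Fq, Finset.sum_range_succ, catalan_one]
  | succ m ih =>
    refine ⟨ih.2, ?_⟩
    have hS := Srec m
    have hT := Trec m
    rw [ih.1, ih.2] at hS
    have hp : (((m : ℚ) + 3) ^ 2 * (2 * m + 3)) ≠ 0 := by positivity
    have := hS.trans hT.symm
    exact mul_left_cancel₀ hp this

theorem stmt_12 (n : ℕ) :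
    ∑ k ∈ Finset.range (2 * n + 1),
      (-1 : ℤ) ^ k * ((2 * n).choose k) * (catalan k) * ((4 * n - 2 * k).choose (2 * n - k)) =
    (((2 * n).choose n : ℤ)) ^ 2 := by
  have h : Sq (2 * n) = Tq (2 * n) := (SeqT (2 * n)).1
  have hQ : ∑ k ∈ Finset.range (2 * n + 1),
      ((-1 : ℚ) ^ k * ((2 * n).choose k) * (catalan k) * ((4 * n - 2 * k).choose (2 * n - k)))
      = (((2 * n).choose n : ℚ)) ^ 2 := by
    have hc : ∀ k ∈ Finset.range (2 * n + 1),
        ((-1 : ℚ) ^ k * ((2 * n).choose k) * (catalan k) * ((4 * n - 2 * k).choose (2 * n - k)))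
        = Fq (2 * n) k := by
      intro k hk
      simp only [Finset.mem_range] at hk
      rw [Fq, show 2 * (2 * n - k) = 4 * n - 2 * k from by omega]
    rw [Finset.sum_congr rfl hc]
    have : (∑ k ∈ Finset.range (2 * n + 1), Fq (2 * n) k) = Sq (2 * n) := rfl
    rw [this, h, Tq, show (2 * n) / 2 = n from by omega]
  exact_mod_cast hQ
end
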